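/- For a strong tournament T on n vertices with scores s_v, the number of minimal feedback vertex sets satisfies f(T) ≤ Σ_{v∈V} M(s_v), where M(k) is the maximum number of minimal FVSs over all k-vertex tournaments; moreover each s_v ≤ n-2. -/

import Mathlib

/-- A set `W` of vertices is acyclic if the digraph `r` restricted to `W`
has no directed cycle (the transitive closure restricted to `W` is irreflexive). -/
def AcyclicOn {V : Type*} (r : V → V → Prop) (W : Set V) : Prop :=
  ∀ v : V, ¬ Relation.TransGen (fun a b => a ∈ W ∧ b ∈ W ∧ r a b) v v

/-- A tournament: an irreflexive relation with exactly one arc between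
every pair of distinct vertices. -/
def IsTournament {V : Type*} (r : V → V → Prop) : Prop :=
  (∀ v : V, ¬ r v v) ∧ ∀ u v : V, u ≠ v → (r u v ↔ ¬ r v u)

/-- A feedback vertex set: its deletion leaves an acyclic digraph. -/
def IsFVS {V : Type*} (r : V → V → Prop) (F : Set V) : Prop :=
  AcyclicOn r Fᶜ

/-- A minimal feedback vertex set. -/
def IsMinimalFVS {V : Type*} (r : V → V → Prop) (F : Set V) : Prop :=
  IsFVS r F ∧ ∀ F' : Set V, F' ⊆ F → IsFVS r F' → F' = F

/-- A feedback vertex set of the subtournament induced on `S`. -/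
def IsFVSOn {V : Type*} (r : V → V → Prop) (S F : Set V) : Prop :=
  F ⊆ S ∧ AcyclicOn r (S \ F)

/-- A minimal feedback vertex set of the subtournament induced on `S`. -/
def IsMinimalFVSOn {V : Type*} (r : V → V → Prop) (S F : Set V) : Prop :=
  IsFVSOn r S F ∧ ∀ F' : Set V, F' ⊆ F → IsFVSOn r S F' → F' = F

/-- Strong (strongly connected): a directed path between any ordered pair. -/
def IsStrong {V : Type*} (r : V → V → Prop) : Prop :=
  ∀ u v : V, Relation.ReflTransGen r u v

/-- The subtournament induced on `S` is strong. -/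
def IsStrongOn {V : Type*} (r : V → V → Prop) (S : Set V) : Prop :=
  ∀ u ∈ S, ∀ v ∈ S, Relation.ReflTransGen (fun a b => a ∈ S ∧ b ∈ S ∧ r a b) u v

/-- The score (out-degree) of a vertex. -/
noncomputable def outScore {V : Type*} (r : V → V → Prop) (v : V) : ℕ :=
  {u : V | r v u}.ncard

/-- The number of minimal feedback vertex sets of a tournament. -/
noncomputable def fvsCount (V : Type*) (r : V → V → Prop) : ℕ :=
  {F : Set V | IsMinimalFVS r F}.ncard

/-- `maxMinFVS n` = maximum number of minimal FVSs over all `n`-vertex tournaments. -/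
noncomputable def maxMinFVS (n : ℕ) : ℕ :=
  sSup {k : ℕ | ∃ r : Fin n → Fin n → Prop, IsTournament r ∧ fvsCount (Fin n) r = k}


/-!
The complement `W` of a minimal feedback vertex set `F` is a maximal acyclic set. It is nonempty,
so, being transitive, it has a source `t`, and then `W = {t} ∪ (N⁺(t) \ F)`. Maximality of `W`
makes `F ∩ N⁺(t)` a minimal feedback vertex set of `T[N⁺(t)]`, and `F` is recovered from it
and `t`. Hence the minimal feedback vertex sets whose complement has source `t` number at most
`M(s_t)`. For the score bound, strong connectivity gives every vertex `v` of a tournament with at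
least two vertices an in-neighbour, which together with `v` is missing from `N⁺(v)`.
-/

open Set Function

section

variable {V W : Type*} {r : V → V → Prop}

def IsSourceOn (r : V → V → Prop) (W : Set V) (t : V) : Prop :=
  t ∈ W ∧ ∀ w ∈ W, w ≠ t → r t w

theorem IsTournament.asymm (hT : IsTournament r) {a b : V} (h : r a b) : ¬ r b a := by
  rcases eq_or_ne a b with rfl | hab
  · exact hT.1 a
  · exact (hT.2 a b hab).mp h

theorem IsTournament.comap (hT : IsTournament r) {f : W → V} (hf : Injective f) :
    IsTournament (fun a b => r (f a) (f b)) :=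
  ⟨fun a => hT.1 (f a), fun a b hab => hT.2 (f a) (f b) (hf.ne hab)⟩

theorem IsStrong.exists_rel_of_ne (hS : IsStrong r) {u v : V} (h : u ≠ v) : ∃ w, r w v := by
  obtain ⟨w, -, hw⟩ := (hS u v).cases_tail.resolve_left h.symm
  exact ⟨w, hw⟩

namespace AcyclicOn

theorem mono {A B : Set V} (hAB : A ⊆ B) (hB : AcyclicOn r B) : AcyclicOn r A :=
  fun v hv => hB v (Relation.TransGen.mono (fun _ _ ⟨ha, hb, h⟩ => ⟨hAB ha, hAB hb, h⟩) v v hv)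

theorem singleton {v : V} (hv : ¬ r v v) : AcyclicOn r {v} := by
  have no_step : ∀ {a b : V}, ¬ (a ∈ ({v} : Set V) ∧ b ∈ ({v} : Set V) ∧ r a b) := by
    rintro a b ⟨rfl, rfl, h⟩
    exact hv h
  rintro w (h | ⟨-, h⟩) <;> exact no_step h

theorem exists_isSourceOn [Finite V] (hT : IsTournament r) {A : Set V} (hA : AcyclicOn r A)
    (hne : A.Nonempty) : ∃ t, IsSourceOn r A t := by
  set R := fun a b => a ∈ A ∧ b ∈ A ∧ r a b
  have : IsTrans V (Relation.TransGen R) := ⟨fun _ _ _ => Relation.TransGen.trans⟩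
  have : Std.Irrefl (Relation.TransGen R) := ⟨hA⟩
  have hwf : WellFounded R :=
    Subrelation.wf Relation.TransGen.single (Finite.wellFounded_of_trans_of_irrefl _)
  obtain ⟨t, htA, hmin⟩ := hwf.has_min A hne
  exact ⟨t, htA, fun w hw hwt => (hT.2 t w hwt.symm).mpr fun h => hmin w hw ⟨hw, htA, h⟩⟩

theorem comap_iff {f : W → V} {A : Set V} (hA : A ⊆ range f) :
    AcyclicOn (fun a b => r (f a) (f b)) (f ⁻¹' A) ↔ AcyclicOn r A := by
  constructor
  · intro h v hv
    obtain ⟨-, ⟨hvA, -⟩, -⟩ := Relation.TransGen.head'_iff.mp hv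
    obtain ⟨w, -⟩ := hA hvA
    have : Nonempty W := ⟨w⟩
    choose! g hg using fun a (ha : a ∈ A) => hA ha
    refine h (g v) (hv.lift g fun a b ⟨ha, hb, hab⟩ => ?_)
    exact ⟨by simpa [hg a ha], by simpa [hg b hb],
      show r (f (g a)) (f (g b)) by rwa [hg a ha, hg b hb]⟩
  · exact fun h v hv => h (f v) (hv.lift f fun _ _ hab => hab)

end AcyclicOn

theorem AcyclicOn.insert_of_forall_not_rel {X : Set V} {t : V} (hX : AcyclicOn r X)
    (ht : ∀ x ∈ insert t X, ¬ r x t) : AcyclicOn r (insert t X) := by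
  set R := fun a b => a ∈ insert t X ∧ b ∈ insert t X ∧ r a b
  have head_ne : ∀ {a b}, R a b → b ≠ t := by
    rintro a b ⟨ha, -, hab⟩ rfl
    exact ht a ha hab
  have avoid : ∀ a b, Relation.TransGen R a b → a ≠ t →
      Relation.TransGen (fun a b => a ∈ X ∧ b ∈ X ∧ r a b) a b := by
    intro a b h
    induction h using Relation.TransGen.head_induction_on with
    | single h =>
      exact fun hat => .single ⟨h.1.resolve_left hat, h.2.1.resolve_left (head_ne h), h.2.2⟩
    | head h _ ih =>
      exact fun hat => .head ⟨h.1.resolve_left hat, h.2.1.resolve_left (head_ne h), h.2.2⟩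
        (ih (head_ne h))
  intro v hv
  have hvt : v ≠ t := by
    cases hv with
    | single h => exact head_ne h
    | tail _ h => exact head_ne h
  exact hX v (avoid v v hv hvt)

theorem IsMinimalFVS.compl_nonempty [Nonempty V] (hirr : ∀ v, ¬ r v v) {F : Set V}
    (hF : IsMinimalFVS r F) : Fᶜ.Nonempty := by
  obtain ⟨v⟩ := ‹Nonempty V›
  by_contra hempty
  rw [not_nonempty_iff_eq_empty, compl_empty_iff] at hempty
  have hfvs : IsFVS r {v}ᶜ := by
    rw [IsFVS, compl_compl]
    exact AcyclicOn.singleton (hirr v)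
  simpa [hempty] using hF.2 {v}ᶜ (by simp [hempty]) hfvs

theorem IsSourceOn.compl_eq_insert {F : Set V} {t : V}
    (ht : IsSourceOn r Fᶜ t) : Fᶜ = insert t ({u | r t u} \ F) := by
  ext u
  rcases eq_or_ne u t with rfl | hut
  · simpa using ht.1
  · simpa [hut] using fun hu => ht.2 u hu hut

theorem IsMinimalFVS.isMinimalFVSOn_inter (hT : IsTournament r) {F : Set V} {t : V}
    (hF : IsMinimalFVS r F) (ht : IsSourceOn r Fᶜ t) :
    IsMinimalFVSOn r {u | r t u} (F ∩ {u | r t u}) := by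
  set S := {u | r t u}
  have hcompl := ht.compl_eq_insert
  refine ⟨⟨inter_subset_right, ?_⟩, fun G hGF hG => ?_⟩
  · rw [sdiff_inter_self_eq_sdiff]
    exact hF.1.mono (hcompl ▸ subset_insert _ _)
  have hins : AcyclicOn r (insert t (S \ G)) :=
    hG.2.insert_of_forall_not_rel fun x hx =>
      hx.elim (fun hxt => hxt ▸ hT.1 t) (fun hx => hT.asymm hx.1)
  have hsub : (insert t (S \ G))ᶜ ⊆ F := by
    rw [compl_subset_comm, hcompl]
    exact insert_subset_insert (sdiff_subset_sdiff_right (hGF.trans inter_subset_left))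
  have hmax : insert t (S \ G) = insert t (S \ F) := by
    rw [← hcompl, ← hF.2 _ hsub (by rwa [IsFVS, compl_compl]), compl_compl]
  have hdiff : S \ G = S \ F := by
    have htS : t ∉ S := hT.1 t
    rw [← insert_sdiff_self_of_notMem (fun h => htS h.1 : t ∉ S \ G), hmax,
      insert_sdiff_self_of_notMem (fun h => htS h.1)]
  rw [← sdiff_sdiff_cancel_left hG.1, hdiff, sdiff_sdiff_right_self, inter_comm]

theorem ncard_isMinimalFVS_isSourceOn_le [Finite V] (hT : IsTournament r) (t : V) :
    {F | IsMinimalFVS r F ∧ IsSourceOn r Fᶜ t}.ncard ≤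
      {G | IsMinimalFVSOn r {u | r t u} G}.ncard := by
  refine ncard_le_ncard_of_injOn (· ∩ {u | r t u})
    (fun F hF => hF.1.isMinimalFVSOn_inter hT hF.2) ?_ (toFinite _)
  intro F₁ h₁ F₂ h₂ (heq : F₁ ∩ {u | r t u} = F₂ ∩ {u | r t u})
  have hdiff : {u | r t u} \ F₁ = {u | r t u} \ F₂ := by
    rw [← sdiff_inter_self_eq_sdiff, heq, sdiff_inter_self_eq_sdiff]
  apply compl_injective
  rw [h₁.2.compl_eq_insert, h₂.2.compl_eq_insert, hdiff]

theorem IsMinimalFVSOn.comap {f : W → V} (hf : Injective f) {G : Set V}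
    (hG : IsMinimalFVSOn r (range f) G) : IsMinimalFVS (fun a b => r (f a) (f b)) (f ⁻¹' G) := by
  have hpre : ∀ H : Set V, f ⁻¹' (range f \ H) = (f ⁻¹' H)ᶜ := fun H => by ext; simp
  refine ⟨?_, fun F hFG hF => ?_⟩
  · rw [IsFVS, ← hpre]
    exact (AcyclicOn.comap_iff sdiff_subset).mpr hG.1.2
  have himage : IsFVSOn r (range f) (f '' F) := by
    refine ⟨image_subset_range f F, (AcyclicOn.comap_iff sdiff_subset).mp ?_⟩
    rwa [hpre, hf.preimage_image]
  rw [← hf.preimage_image F, hG.2 _ (image_subset_iff.mpr hFG) himage]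

theorem fvsCount_le_maxMinFVS {m : ℕ} {r : Fin m → Fin m → Prop} (hT : IsTournament r) :
    fvsCount (Fin m) r ≤ maxMinFVS m :=
  le_csSup ⟨Nat.card (Set (Fin m)), by rintro _ ⟨r, -, rfl⟩; exact ncard_le_card _⟩ ⟨r, hT, rfl⟩

theorem ncard_isMinimalFVSOn_le_maxMinFVS [Finite V] (hT : IsTournament r) (S : Set V) :
    {G | IsMinimalFVSOn r S G}.ncard ≤ maxMinFVS S.ncard := by
  let e : Fin S.ncard ≃ S := ((Finite.equivFin S).trans (finCongr (Nat.card_coe_set_eq S))).symm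
  let f : Fin S.ncard → V := Subtype.val ∘ e
  have hf : Injective f := Subtype.val_injective.comp e.injective
  have hrange : range f = S := by simp [f, EquivLike.range_comp]
  calc {G | IsMinimalFVSOn r S G}.ncard ≤ fvsCount (Fin S.ncard) (fun a b => r (f a) (f b)) := by
        refine ncard_le_ncard_of_injOn (f ⁻¹' ·) (fun G hG => (hrange ▸ hG).comap hf)
          (fun G₁ h₁ G₂ h₂ heq => ?_) (toFinite _)
        rw [← image_preimage_eq_of_subset (h₁.1.1.trans hrange.ge),
          ← image_preimage_eq_of_subset (h₂.1.1.trans hrange.ge)]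
        exact congrArg (f '' ·) heq
    _ ≤ maxMinFVS S.ncard := fvsCount_le_maxMinFVS (hT.comap hf)

theorem ncard_isMinimalFVS_le_sum_maxMinFVS [Fintype V] [Nonempty V] (hT : IsTournament r) :
    {F | IsMinimalFVS r F}.ncard ≤ ∑ v, maxMinFVS (outScore r v) := by
  have hcover : {F | IsMinimalFVS r F} ⊆ ⋃ t, {F | IsMinimalFVS r F ∧ IsSourceOn r Fᶜ t} := by
    intro F hF
    obtain ⟨t, ht⟩ := hF.1.exists_isSourceOn hT (hF.compl_nonempty hT.1)
    exact mem_iUnion.2 ⟨t, hF, ht⟩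
  calc {F | IsMinimalFVS r F}.ncard
      ≤ (⋃ t, {F | IsMinimalFVS r F ∧ IsSourceOn r Fᶜ t}).ncard := ncard_le_ncard hcover
    _ ≤ ∑ t, {F | IsMinimalFVS r F ∧ IsSourceOn r Fᶜ t}.ncard := ncard_iUnion_le_of_fintype _
    _ ≤ ∑ t, maxMinFVS (outScore r t) := Finset.sum_le_sum fun t _ =>
        (ncard_isMinimalFVS_isSourceOn_le hT t).trans (ncard_isMinimalFVSOn_le_maxMinFVS hT _)

theorem IsTournament.outScore_le_card_sub_two [Fintype V] (hT : IsTournament r)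
    (hS : IsStrong r) (v : V) : outScore r v ≤ Fintype.card V - 2 := by
  by_cases hin : ∃ w, r w v
  · obtain ⟨w, hwv⟩ := hin
    have hsub : {u | r v u} ⊆ {v, w}ᶜ := by
      rintro u hvu (rfl | rfl)
      exacts [hT.1 u hvu, hT.asymm hwv hvu]
    have hvw : v ≠ w := fun h => hT.1 v (h ▸ hwv)
    calc outScore r v ≤ ({v, w}ᶜ : Set V).ncard := ncard_le_ncard hsub
      _ = Fintype.card V - 2 := by rw [ncard_compl, ncard_pair hvw, Nat.card_eq_fintype_card]
  · have hempty : {u | r v u} = ∅ :=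
      eq_empty_of_forall_notMem fun u hvu =>
        hin (hS.exists_rel_of_ne fun h => hT.1 v (h ▸ hvu))
    rw [outScore, hempty, ncard_empty]
    exact Nat.zero_le _

end

/-- For a strong tournament on `n` vertices, `f(T) ≤ Σ_v M(s_v)`, and moreover every
score satisfies `s_v ≤ n - 2`. -/
theorem stmt15 {V : Type*} [Fintype V] [Nonempty V] (n : ℕ)
    (hcard : Fintype.card V = n)
    (r : V → V → Prop) (hT : IsTournament r) (hS : IsStrong r) :
    {F : Set V | IsMinimalFVS r F}.ncard ≤ ∑ v : V, maxMinFVS (outScore r v) ∧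
    ∀ v : V, outScore r v ≤ n - 2 :=
  ⟨ncard_isMinimalFVS_le_sum_maxMinFVS hT, hcard ▸ hT.outScore_le_card_sub_two hS⟩
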